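/- arXiv:2003.14331 — 2 statements merged into one kernel-verified Lean document; each statement's English description precedes it below -/
import Mathlib

section
/- Let d ≥ 1 and let F⁰ : ℝ^d → ℝ be a bounded 1-periodic function with mean zero, having an absolutely convergent Fourier series with F̂⁰(k) ≥ 0 for all k ∈ ℤ^d, k ≠ 0. Then for any m ≥ 1 and any points x^1, …, x^m ∈ [0,1)^d one has sup_{y ∈ ℝ^d} |(1/m) ∑_{μ=1}^m F⁰(x^μ − y)| ≤ ‖F⁰‖_∞^{1/2} · m^{−1} · (∑_{j=1}^m ∑_{n=1}^m F⁰(x^n − x^j))^{1/2}. -/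
/-!
Write `F⁰(z) = ∑_k a_k e(⟨k, z⟩)` with `a_k = F̂⁰(k) ≥ 0` (mean zero makes `a_0 = 0`) and put
`Q(k) = ∑_μ e(⟨k, x^μ⟩)`. Then `∑_μ F⁰(x^μ - y) = ∑_k a_k Q(k) e(-⟨k, y⟩)`, whose modulus is at most
`∑_k a_k |Q(k)|`, while `∑_{j,n} F⁰(x^n - x^j) = ∑_k a_k |Q(k)|²`. Cauchy–Schwarz with the weights
`a_k` gives `∑_k a_k |Q(k)| ≤ (∑_k a_k)^{1/2} (∑_k a_k |Q(k)|²)^{1/2}`, and `∑_k a_k = F⁰(0)`, which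
is also `sup |F⁰|` because `|F⁰(z)| ≤ ∑_k a_k`. Only the character property of `e(⟨k, ·⟩)` enters,
so all of this holds for any real function on an abelian group that is a nonnegative, absolutely
summable combination of characters.
-/

open MeasureTheory

/-- The unit cube `[0,1)^d` in `ℝ^d`. -/
noncomputable def unitCube (d : ℕ) : Set (Fin d → ℝ) :=
  Set.univ.pi fun _ => Set.Ico (0 : ℝ) 1

/-- The `k`-th Fourier coefficient `ĝ(k) = ∫_{[0,1)^d} g(x) e^{-2πi⟨k,x⟩} dx`. -/
noncomputable def fourierCoef (d : ℕ) (g : (Fin d → ℝ) → ℂ) (k : Fin d → ℤ) : ℂ :=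
  ∫ x in unitCube d, g x *
    Complex.exp (-(2 * Real.pi * Complex.I) * ((∑ i, (k i : ℝ) * x i : ℝ) : ℂ))

open ComplexConjugate ComplexOrder

namespace Real

lemma tsum_sqrt_mul_sqrt_le {ι : Type*} {f g : ι → ℝ} (hf : 0 ≤ f) (hg : 0 ≤ g)
    (hfs : Summable f) (hgs : Summable g) :
    ∑' i, √(f i) * √(g i) ≤ √(∑' i, f i) * √(∑' i, g i) :=
  tsum_le_of_sum_le (fun i => by positivity) fun s =>
    (sum_sqrt_mul_sqrt_le s hf hg).trans <| by
      gcongr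
      exacts [hfs.sum_le_tsum s fun i _ => hf i, hgs.sum_le_tsum s fun i _ => hg i]

end Real

section CharacterExpansion

variable {G ι α : Type*} [AddCommGroup G] {χ : ι → AddChar G Circle} {a : ι → ℝ} {f : G → ℝ}

lemma summable_mul_of_norm_le {b : ι → ℂ} {C : ℝ} (ha : 0 ≤ a) (hs : Summable a)
    (hb : ∀ k, ‖b k‖ ≤ C) : Summable fun k => (a k : ℂ) * b k :=
  .of_norm_bounded (hs.mul_right C) fun k => by
    rw [norm_mul, Complex.norm_real, Real.norm_of_nonneg (ha k)]
    exact mul_le_mul_of_nonneg_left (hb k) (ha k)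

lemma norm_sum_addChar_le (s : Finset α) (x : α → G) (k : ι) :
    ‖∑ μ ∈ s, (χ k (x μ) : ℂ)‖ ≤ s.card :=
  (norm_sum_le _ _).trans_eq <| by simp only [Circle.norm_coe, Finset.sum_const, nsmul_one]

lemma sum_apply_sub_eq_tsum (ha : 0 ≤ a) (hs : Summable a)
    (hf : ∀ g, (f g : ℂ) = ∑' k, (a k : ℂ) * (χ k g : ℂ)) (s : Finset α) (x : α → G) (y : G) :
    (∑ μ ∈ s, f (x μ - y) : ℂ) =
      ∑' k, a k * ((∑ μ ∈ s, (χ k (x μ) : ℂ)) * conj (χ k y : ℂ)) := by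
  simp_rw [hf]
  rw [← Summable.tsum_finsetSum fun μ _ => 
    summable_mul_of_norm_le ha hs fun k => (Circle.norm_coe (χ k _)).le]
  refine tsum_congr fun k => ?_
  rw [Finset.sum_mul, Finset.mul_sum]
  refine Finset.sum_congr rfl fun μ _ => ?_
  rw [AddChar.map_sub_eq_div, Circle.coe_div, ← Circle.coe_inv_eq_conj, Circle.coe_inv,
    div_eq_mul_inv]

lemma norm_sum_addChar_mul_conj_le (s : Finset α) (x : α → G) (k : ι) (y : G) :
    ‖(∑ μ ∈ s, (χ k (x μ) : ℂ)) * conj (χ k y : ℂ)‖ ≤ s.card := by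
  rw [norm_mul, Complex.norm_conj, Circle.norm_coe, mul_one]
  exact norm_sum_addChar_le s x k

lemma abs_sum_apply_sub_le (ha : 0 ≤ a) (hs : Summable a)
    (hf : ∀ g, (f g : ℂ) = ∑' k, (a k : ℂ) * (χ k g : ℂ)) (s : Finset α) (x : α → G) (y : G) :
    |∑ μ ∈ s, f (x μ - y)| ≤ ∑' k, a k * ‖∑ μ ∈ s, (χ k (x μ) : ℂ)‖ := by
  rw [← Real.norm_eq_abs, ← Complex.norm_real, Complex.ofReal_sum, sum_apply_sub_eq_tsum ha hs hf]
  refine (norm_tsum_le_tsum_norm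
    (summable_mul_of_norm_le ha hs (norm_sum_addChar_mul_conj_le s x · y)).norm).trans_eq <|
    tsum_congr fun k => ?_
  rw [norm_mul, norm_mul, Complex.norm_conj, Circle.norm_coe, mul_one, Complex.norm_real,
    Real.norm_of_nonneg (ha k)]

lemma sum_sum_apply_sub_eq_tsum (ha : 0 ≤ a) (hs : Summable a)
    (hf : ∀ g, (f g : ℂ) = ∑' k, (a k : ℂ) * (χ k g : ℂ)) (s : Finset α) (x : α → G) :
    ∑ j ∈ s, ∑ n ∈ s, f (x n - x j) = ∑' k, a k * ‖∑ μ ∈ s, (χ k (x μ) : ℂ)‖ ^ 2 := by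
  apply Complex.ofReal_injective
  push_cast
  simp_rw [sum_apply_sub_eq_tsum ha hs hf]
  rw [← Summable.tsum_finsetSum fun j _ =>
    summable_mul_of_norm_le ha hs (norm_sum_addChar_mul_conj_le s x · (x j))]
  refine tsum_congr fun k => ?_
  rw [← Finset.mul_sum, ← Finset.mul_sum, ← map_sum, Complex.mul_conj, Complex.normSq_eq_norm_sq]
  push_cast; ring

lemma apply_zero_eq_tsum (hf : ∀ g, (f g : ℂ) = ∑' k, (a k : ℂ) * (χ k g : ℂ)) :
    f 0 = ∑' k, a k := by
  apply Complex.ofReal_injective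
  simp [hf, Complex.ofReal_tsum]

lemma abs_apply_le_apply_zero (ha : 0 ≤ a) (hs : Summable a)
    (hf : ∀ g, (f g : ℂ) = ∑' k, (a k : ℂ) * (χ k g : ℂ)) (g : G) : |f g| ≤ f 0 := by
  simpa [Circle.norm_coe, ← apply_zero_eq_tsum hf] using
    abs_sum_apply_sub_le ha hs hf {()} (fun _ => g) 0

lemma iSup_abs_apply_eq_apply_zero (ha : 0 ≤ a) (hs : Summable a)
    (hf : ∀ g, (f g : ℂ) = ∑' k, (a k : ℂ) * (χ k g : ℂ)) : ⨆ g, |f g| = f 0 :=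
  le_antisymm (ciSup_le (abs_apply_le_apply_zero ha hs hf))
    (le_ciSup_of_le ⟨f 0, Set.forall_mem_range.2 (abs_apply_le_apply_zero ha hs hf)⟩ 0
      (le_abs_self _))

theorem abs_sum_apply_sub_le_sqrt_mul_sqrt (ha : 0 ≤ a) (hs : Summable a)
    (hf : ∀ g, (f g : ℂ) = ∑' k, (a k : ℂ) * (χ k g : ℂ)) (s : Finset α) (x : α → G) (y : G) :
    |∑ μ ∈ s, f (x μ - y)| ≤ √(f 0) * √(∑ j ∈ s, ∑ n ∈ s, f (x n - x j)) := by
  set Q : ι → ℝ := fun k => ‖∑ μ ∈ s, (χ k (x μ) : ℂ)‖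
  have hQs : Summable fun k => a k * Q k ^ 2 :=
    .of_nonneg_of_le (fun k => mul_nonneg (ha k) (sq_nonneg _))
      (fun k => mul_le_mul_of_nonneg_left (pow_le_pow_left₀ (norm_nonneg _)
        (norm_sum_addChar_le s x k) 2) (ha k)) (hs.mul_right _)
  rw [apply_zero_eq_tsum hf, sum_sum_apply_sub_eq_tsum ha hs hf]
  calc |∑ μ ∈ s, f (x μ - y)|
      ≤ ∑' k, a k * Q k := abs_sum_apply_sub_le ha hs hf s x y
    _ = ∑' k, √(a k) * √(a k * Q k ^ 2) := tsum_congr fun k => by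
      rw [Real.sqrt_mul (ha k), Real.sqrt_sq (norm_nonneg _), ← mul_assoc,
        Real.mul_self_sqrt (ha k)]
    _ ≤ √(∑' k, a k) * √(∑' k, a k * Q k ^ 2) :=
      Real.tsum_sqrt_mul_sqrt_le ha (fun k => mul_nonneg (ha k) (sq_nonneg _)) hs hQs

end CharacterExpansion

noncomputable def fourierAddChar (d : ℕ) (k : Fin d → ℤ) : AddChar (Fin d → ℝ) Circle :=
  Real.fourierChar.compAddMonoidHom <| AddMonoidHom.mk' (fun z => ∑ i, (k i : ℝ) * z i) <| by
    intro u v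
    simp only [Pi.add_apply, mul_add, Finset.sum_add_distrib]

lemma coe_fourierAddChar (d : ℕ) (k : Fin d → ℤ) (z : Fin d → ℝ) :
    (fourierAddChar d k z : ℂ) =
      Complex.exp (2 * Real.pi * Complex.I * ((∑ i, (k i : ℝ) * z i : ℝ) : ℂ)) := by
  rw [fourierAddChar, AddChar.compAddMonoidHom_apply, AddMonoidHom.mk'_apply,
    Real.fourierChar_apply]
  congr 1
  push_cast
  ring

lemma fourierCoef_zero_eq_zero {d : ℕ} {F : (Fin d → ℝ) → ℝ}
    (hmean : ∫ x in unitCube d, F x = 0) : fourierCoef d (fun x => (F x : ℂ)) 0 = 0 := by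
  simp [fourierCoef, integral_complex_ofReal, hmean]

theorem statement5_general (d : ℕ) (F0 : (Fin d → ℝ) → ℝ)
    (hmean : (∫ x in unitCube d, F0 x) = 0)
    (hsum : Summable fun k : Fin d → ℤ => ‖fourierCoef d (fun x => (F0 x : ℂ)) k‖)
    (hrep : ∀ x : Fin d → ℝ,
      (F0 x : ℂ) = ∑' k : Fin d → ℤ, fourierCoef d (fun x => (F0 x : ℂ)) k *
        Complex.exp (2 * Real.pi * Complex.I * ((∑ i, (k i : ℝ) * x i : ℝ) : ℂ)))
    (hpos : ∀ k : Fin d → ℤ, k ≠ 0 →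
      (fourierCoef d (fun x => (F0 x : ℂ)) k).im = 0 ∧
        0 ≤ (fourierCoef d (fun x => (F0 x : ℂ)) k).re)
    (m : ℕ) (x : Fin m → Fin d → ℝ) :
    ∀ y : Fin d → ℝ,
      |(m : ℝ)⁻¹ * ∑ μ : Fin m, F0 (x μ - y)| ≤
        Real.sqrt (⨆ z, |F0 z|) * (m : ℝ)⁻¹ *
          Real.sqrt (∑ j : Fin m, ∑ n : Fin m, F0 (x n - x j)) := by
  intro y
  set c := fourierCoef d fun z => (F0 z : ℂ)
  have hc_nonneg (k : Fin d → ℤ) : 0 ≤ c k := by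
    rcases eq_or_ne k 0 with rfl | hk
    · exact (fourierCoef_zero_eq_zero hmean).ge
    · exact Complex.nonneg_iff.2 ⟨(hpos k hk).2, (hpos k hk).1.symm⟩
  have hF (z : Fin d → ℝ) : (F0 z : ℂ) = ∑' k, (‖c k‖ : ℂ) * (fourierAddChar d k z : ℂ) := by
    rw [hrep z]
    exact tsum_congr fun k => by
      rw [coe_fourierAddChar, ← Complex.eq_coe_norm_of_nonneg (hc_nonneg k)]
  have ha : 0 ≤ fun k => ‖c k‖ := fun k => norm_nonneg _
  rw [iSup_abs_apply_eq_apply_zero ha hsum hF, abs_mul, abs_inv, Nat.abs_cast,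
    mul_comm √(F0 0), mul_assoc]
  exact mul_le_mul_of_nonneg_left
    (abs_sum_apply_sub_le_sqrt_mul_sqrt ha hsum hF Finset.univ x y) (by positivity)

/-- The chain of inequalities (Cauchy–Schwarz plus the key identity) of the proof of the main
theorem: `sup_y |(1/m) ∑_μ F⁰(x^μ - y)| ≤ ‖F⁰‖_∞^{1/2} m^{-1} (∑_{j,n} F⁰(x^n - x^j))^{1/2}`. -/
theorem statement5 (d : ℕ) (hd : 1 ≤ d) (F0 : (Fin d → ℝ) → ℝ)
    (hbdd : ∃ C : ℝ, ∀ x, |F0 x| ≤ C)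
    (hper : ∀ (x : Fin d → ℝ) (k : Fin d → ℤ), F0 (x + fun i => (k i : ℝ)) = F0 x)
    (hmean : (∫ x in unitCube d, F0 x) = 0)
    (hsum : Summable fun k : Fin d → ℤ => ‖fourierCoef d (fun x => (F0 x : ℂ)) k‖)
    (hrep : ∀ x : Fin d → ℝ,
      (F0 x : ℂ) = ∑' k : Fin d → ℤ, fourierCoef d (fun x => (F0 x : ℂ)) k *
        Complex.exp (2 * Real.pi * Complex.I * ((∑ i, (k i : ℝ) * x i : ℝ) : ℂ)))
    (hpos : ∀ k : Fin d → ℤ, k ≠ 0 →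
      (fourierCoef d (fun x => (F0 x : ℂ)) k).im = 0 ∧
        0 ≤ (fourierCoef d (fun x => (F0 x : ℂ)) k).re)
    (m : ℕ) (hm : 1 ≤ m) (x : Fin m → Fin d → ℝ) (hx : ∀ j, x j ∈ unitCube d) :
    ∀ y : Fin d → ℝ,
      |(m : ℝ)⁻¹ * ∑ μ : Fin m, F0 (x μ - y)| ≤
        Real.sqrt (⨆ z, |F0 z|) * (m : ℝ)⁻¹ *
          Real.sqrt (∑ j : Fin m, ∑ n : Fin m, F0 (x n - x j)) :=
  statement5_general d F0 hmean hsum hrep hpos m x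
end

section
/- Let d ≥ 1 and let F⁰ : ℝ^d → ℝ be an even 1-periodic function with mean zero, having an absolutely convergent Fourier series with F̂⁰(k) ≥ 0 for all k ∈ ℤ^d, k ≠ 0. Suppose the points ξ^1, …, ξ^m ∈ [0,1)^d satisfy ∑_{j=1}^{n−1} F⁰(ξ^n − ξ^j) ≤ 0 for every n = 2, …, m. Then ∑_{k ∈ ℤ^d, k ≠ 0} F̂⁰(k) |Q(ξ, k)|² ≤ F⁰(0) / m, where Q(ξ, k) := (1/m) ∑_{j=1}^m e^{2πi⟨k,ξ^j⟩}. -/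
/-! Expanding each `F⁰(ξⁿ - ξʲ)` in its absolutely convergent Fourier series and using
`e_k(x - y) = e_k(x) conj (e_k(y))` turns the double sum `∑_{n,j} F⁰(ξⁿ - ξʲ)` into
`m² ∑_k F̂⁰(k) |Q(ξ,k)|²`, whose `k = 0` term vanishes because `F⁰` has mean zero.
On the other hand, since `F⁰` is even the double sum is its diagonal `m F⁰(0)` plus twice the
sum below the diagonal, which the Averaging Search condition makes nonpositive. -/

open MeasureTheory

/-- `Q(ξ, k) = (1/m) ∑_{j=1}^m e^{2πi⟨k, ξ^j⟩}`. -/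
noncomputable def Qpt (d m : ℕ) (ξ : Fin m → Fin d → ℝ) (k : Fin d → ℤ) : ℂ :=
  (m : ℂ)⁻¹ * ∑ j, Complex.exp (2 * Real.pi * Complex.I * ((∑ i, (k i : ℝ) * ξ j i : ℝ) : ℂ))

open Complex Finset ComplexConjugate

noncomputable def fourierExp {d : ℕ} (k : Fin d → ℤ) (x : Fin d → ℝ) : ℂ :=
  exp (2 * Real.pi * I * ((∑ i, (k i : ℝ) * x i : ℝ) : ℂ))

theorem norm_fourierExp {d : ℕ} (k : Fin d → ℤ) (x : Fin d → ℝ) : ‖fourierExp k x‖ = 1 := by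
  rw [fourierExp, norm_exp]
  simp

theorem fourierExp_sub {d : ℕ} (k : Fin d → ℤ) (x y : Fin d → ℝ) :
    fourierExp k (x - y) = fourierExp k x * conj (fourierExp k y) := by
  rw [fourierExp, fourierExp, fourierExp, ← exp_conj, ← exp_add]
  congr 1
  simp only [Pi.sub_apply, mul_sub, sum_sub_distrib, map_mul, conj_I, conj_ofReal, map_ofNat]
  push_cast
  ring

theorem normSq_sum_fourierExp {d m : ℕ} (ξ : Fin m → Fin d → ℝ) (k : Fin d → ℤ) :
    normSq (∑ j, fourierExp k (ξ j)) = (m : ℝ) ^ 2 * ‖Qpt d m ξ k‖ ^ 2 := by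
  rcases eq_or_ne m 0 with rfl | hm
  · simp
  · rw [Qpt, normSq_eq_norm_sq, norm_mul, mul_pow, norm_inv, norm_natCast]
    field_simp
    rfl

theorem fourierCoef_zero {d : ℕ} (g : (Fin d → ℝ) → ℂ) :
    fourierCoef d g 0 = ∫ x in unitCube d, g x := by
  simp [fourierCoef]

theorem hasSum_mul_normSq_sum_fourierExp {d m : ℕ} (G : (Fin d → ℝ) → ℂ) (c : (Fin d → ℤ) → ℂ)
    (hc : Summable fun k => ‖c k‖) (hG : ∀ x, G x = ∑' k, c k * fourierExp k x)
    (ξ : Fin m → Fin d → ℝ) :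
    HasSum (fun k => c k * normSq (∑ j, fourierExp k (ξ j)))
      (∑ n, ∑ j, G (ξ n - ξ j)) := by
  have hpair : ∀ n j, HasSum (fun k => c k * (fourierExp k (ξ n) * conj (fourierExp k (ξ j))))
      (G (ξ n - ξ j)) := by
    intro n j
    simp only [hG, ← fourierExp_sub]
    refine (Summable.of_norm_bounded hc fun k => ?_).hasSum
    simp [norm_fourierExp]
  convert hasSum_sum fun n _ => hasSum_sum fun j _ => hpair n j using 1
  ext k
  rw [← mul_conj, map_sum, sum_mul_sum, mul_sum]
  simp only [mul_sum]

theorem hasSum_re_mul_normSq_sum_fourierExp {d m : ℕ} (F : (Fin d → ℝ) → ℝ)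
    (c : (Fin d → ℤ) → ℂ)
    (hc : Summable fun k => ‖c k‖) (hF : ∀ x, (F x : ℂ) = ∑' k, c k * fourierExp k x)
    (ξ : Fin m → Fin d → ℝ) :
    HasSum (fun k => (c k).re * normSq (∑ j, fourierExp k (ξ j)))
      (∑ n, ∑ j, F (ξ n - ξ j)) := by
  simpa using hasSum_re (hasSum_mul_normSq_sum_fourierExp (fun x => (F x : ℂ)) c hc hF ξ)

theorem sum_sum_le_sum_diag_of_symm {ι : Type*} [Fintype ι] [LinearOrder ι] (f : ι → ι → ℝ)
    (hsymm : ∀ i j, f i j = f j i) (hlower : ∀ i, ∑ j ∈ univ.filter (· < i), f i j ≤ 0) :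
    ∑ i, ∑ j, f i j ≤ ∑ i, f i i := by
  have hsplit : ∀ i j, f i j = (if j < i then f i j else 0) + (if i < j then f j i else 0)
      + (if j = i then f i i else 0) := by
    intro i j
    rcases lt_trichotomy j i with h | rfl | h
    · simp [h, h.ne, h.not_gt]
    · simp
    · simp [h, h.ne', h.not_gt, hsymm i j]
  have hupper : ∑ i, ∑ j, (if i < j then f j i else 0) = ∑ i, ∑ j, (if j < i then f i j else 0) :=
    sum_comm
  conv_lhs => enter [2, i, 2, j]; rw [hsplit i j]
  simp only [sum_add_distrib, hupper, sum_ite_eq', mem_univ, if_true]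
  have : ∑ i : ι, ∑ j, (if j < i then f i j else 0) ≤ 0 :=
    sum_nonpos fun i _ => (sum_filter (· < i) (f i)).symm.trans_le (hlower i)
  linarith

theorem statement8_general (d : ℕ) (F0 : (Fin d → ℝ) → ℝ)
    (heven : ∀ x, F0 (-x) = F0 x)
    (hmean : (∫ x in unitCube d, F0 x) = 0)
    (hsum : Summable fun k : Fin d → ℤ => ‖fourierCoef d (fun x => (F0 x : ℂ)) k‖)
    (hrep : ∀ x : Fin d → ℝ,
      (F0 x : ℂ) = ∑' k : Fin d → ℤ, fourierCoef d (fun x => (F0 x : ℂ)) k *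
        Complex.exp (2 * Real.pi * Complex.I * ((∑ i, (k i : ℝ) * x i : ℝ) : ℂ)))
    (m : ℕ) (hm : 1 ≤ m) (ξ : Fin m → Fin d → ℝ)
    (hAS : ∀ n : Fin m, ∑ j ∈ Finset.univ.filter (fun j => j < n), F0 (ξ n - ξ j) ≤ 0) :
    ∑' k : {k : Fin d → ℤ // k ≠ 0},
        (fourierCoef d (fun x => (F0 x : ℂ)) k.1).re * (‖Qpt d m ξ k.1‖) ^ 2 ≤
      F0 0 / m := by
  set c := fourierCoef d (fun x => (F0 x : ℂ))
  set S := ∑ n, ∑ j, F0 (ξ n - ξ j)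
  have hm0 : (0 : ℝ) < m := by exact_mod_cast hm
  have hc0 : c 0 = 0 :=
    (fourierCoef_zero _).trans <| integral_ofReal.trans (by simp [hmean])
  have hspectral : HasSum (fun k => (c k).re * ‖Qpt d m ξ k‖ ^ 2) (S / m ^ 2) := by
    have := (hasSum_re_mul_normSq_sum_fourierExp F0 c hsum hrep ξ).div_const ((m : ℝ) ^ 2)
    simpa only [normSq_sum_fourierExp, mul_left_comm _ ((m : ℝ) ^ 2),
      mul_div_cancel_left₀ _ (pow_pos hm0 2).ne'] using this
  have hsupport : Function.support (fun k => (c k).re * ‖Qpt d m ξ k‖ ^ 2) ⊆ {k | k ≠ 0} :=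
    fun k hk h0 => hk (by simp [h0, hc0])
  have haveraging : S ≤ m * F0 0 := by
    simpa using sum_sum_le_sum_diag_of_symm (fun n j => F0 (ξ n - ξ j))
      (fun n j => by rw [← heven, neg_sub]) hAS
  calc _ = S / m ^ 2 := ((hasSum_subtype_iff_of_support_subset hsupport).2 hspectral).tsum_eq
    _ ≤ m * F0 0 / m ^ 2 := by gcongr
    _ = F0 0 / m := by field_simp

/-- Spectral bound: if the points `ξ^1, …, ξ^m` satisfy the Averaging Search condition for an
even, mean-zero `F⁰` with absolutely convergent Fourier series and `F̂⁰(k) ≥ 0` for `k ≠ 0`,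
then `∑_{k ≠ 0} F̂⁰(k) |Q(ξ,k)|² ≤ F⁰(0)/m`. -/
theorem statement8 (d : ℕ) (hd : 1 ≤ d) (F0 : (Fin d → ℝ) → ℝ)
    (hper : ∀ (x : Fin d → ℝ) (k : Fin d → ℤ), F0 (x + fun i => (k i : ℝ)) = F0 x)
    (heven : ∀ x, F0 (-x) = F0 x)
    (hmean : (∫ x in unitCube d, F0 x) = 0)
    (hsum : Summable fun k : Fin d → ℤ => ‖fourierCoef d (fun x => (F0 x : ℂ)) k‖)
    (hrep : ∀ x : Fin d → ℝ,
      (F0 x : ℂ) = ∑' k : Fin d → ℤ, fourierCoef d (fun x => (F0 x : ℂ)) k *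
        Complex.exp (2 * Real.pi * Complex.I * ((∑ i, (k i : ℝ) * x i : ℝ) : ℂ)))
    (hpos : ∀ k : Fin d → ℤ, k ≠ 0 →
      (fourierCoef d (fun x => (F0 x : ℂ)) k).im = 0 ∧
        0 ≤ (fourierCoef d (fun x => (F0 x : ℂ)) k).re)
    (m : ℕ) (hm : 1 ≤ m) (ξ : Fin m → Fin d → ℝ) (hξ : ∀ j, ξ j ∈ unitCube d)
    (hAS : ∀ n : Fin m, ∑ j ∈ Finset.univ.filter (fun j => j < n), F0 (ξ n - ξ j) ≤ 0) :
    ∑' k : {k : Fin d → ℤ // k ≠ 0},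
        (fourierCoef d (fun x => (F0 x : ℂ)) k.1).re * (‖Qpt d m ξ k.1‖) ^ 2 ≤
      F0 0 / m :=
  statement8_general d F0 heven hmean hsum hrep m hm ξ hAS
end
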